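/- Let M = ([n], r) be an avoidance transversal matroid with presentation (S_1,…,S_k), and let φ(M) be the transversal q-matroid on F_q^n with presentation (φ(S_1),…,φ(S_k)) with rank function ρ. If X ⊆ [n] is not a flat of M, then φ(X) is not a flat of φ(M); specifically there exists j ∉ X with ρ(φ(X) + span(e_j)) = ρ(φ(X)). -/

import Mathlib

open Submodule

/-- `X` has an avoidance transversal of the family `A`: an injection `f` from `X`
into the index type with `x ∉ A (f x)` for all `x ∈ X`. -/
def AvoidsT {α ι : Type*} (A : ι → Set α) (X : Finset α) : Prop :=
  ∃ f : {x // x ∈ X} → ι, Function.Injective f ∧ ∀ x : {x // x ∈ X}, (x : α) ∉ A (f x)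

/-- The rank function of the avoidance transversal matroid with presentation `A`:
the maximum size of a subset of `X` admitting an avoidance transversal. -/
noncomputable def atRank {α ι : Type*} (A : ι → Set α) (X : Finset α) : ℕ :=
  sSup {m | ∃ Y : Finset α, Y ⊆ X ∧ AvoidsT A Y ∧ Y.card = m}

/-- `W` is a partial q-transversal of the family of subspaces `X`: every linear
basis of `W` admits an avoidance transversal of `X`. These are the independent
spaces of the transversal q-matroid with presentation `X`. -/
def IsPartialQT {𝔽 V ι : Type*} [Field 𝔽] [AddCommGroup V] [Module 𝔽 V]
    (X : ι → Submodule 𝔽 V) (W : Submodule 𝔽 V) : Prop :=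
  ∀ β : Finset V, (β : Set V) ⊆ (W : Set V) →
    LinearIndependent 𝔽 (fun b : {x // x ∈ β} => (b : V)) →
    span 𝔽 (β : Set V) = W →
    AvoidsT (fun i => ((X i : Submodule 𝔽 V) : Set V)) β

/-- The rank function of the transversal q-matroid with presentation `X`. -/
noncomputable def qtRank {𝔽 V ι : Type*} [Field 𝔽] [AddCommGroup V] [Module 𝔽 V]
    (X : ι → Submodule 𝔽 V) (W : Submodule 𝔽 V) : ℕ :=
  sSup {d | ∃ U : Submodule 𝔽 V, U ≤ W ∧ IsPartialQT X U ∧ Module.finrank 𝔽 U = d}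

/-- The coordinate subspace `φ(S) = span {e_i : i ∈ S}` of `𝔽^n`. -/
def coordSub (𝔽 : Type*) [Field 𝔽] {n : ℕ} (S : Set (Fin n)) : Submodule 𝔽 (Fin n → 𝔽) :=
  span 𝔽 ((fun i => Pi.single i (1 : 𝔽)) '' S)

/-- The support of a vector: the set of indices of its nonzero coordinates. -/
def suppS {𝔽 : Type*} [Field 𝔽] {n : ℕ} (v : Fin n → 𝔽) : Set (Fin n) := {j | v j ≠ 0}

/-!
The q-rank of a coordinate subspace is the matroid rank of its index set:
`ρ(φ(Y)) = r(Y)` for every `Y ⊆ [n]`. Hence if `r(X ∪ {j}) = r(X)` then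
`ρ(φ(X) + ⟨e_j⟩) = ρ(φ(X ∪ {j})) = ρ(φ(X))`.

`r ≤ ρ`: if `Z` has an avoidance transversal `g`, a linearly independent family in `φ(Z)`
has, by Hall's theorem, distinct coordinates `h b ∈ Z` with `b (h b) ≠ 0`, and then
`b ∉ φ(S_{g (h b)})`.

`ρ ≤ r`: let `U ≤ φ(Y)` be independent of dimension `d`. For `T ⊆ Y`, the dimension of
`U ⊓ φ(T)` is at least `d + |T| - |Y|`, and at most the number of `S_i` not containing `T`
(extend a basis of `U ⊓ φ(T)` to one of `U` and use its avoidance transversal). This is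
Hall's condition with deficiency `|Y| - d` for the sets `{i | y ∉ S_i}`, so some `Z ⊆ Y`
with `d ≤ |Z|` has an avoidance transversal.
-/

open Finset Function

section Coordinates

variable {𝔽 : Type*} [Field 𝔽] {n : ℕ}

lemma coordSub_eq_spanSubset (T : Set (Fin n)) : coordSub 𝔽 T = Pi.spanSubset 𝔽 T := by
  simp [coordSub, Pi.spanSubset]

lemma mem_coordSub_iff {T : Set (Fin n)} {v : Fin n → 𝔽} :
    v ∈ coordSub 𝔽 T ↔ ∀ i ∉ T, v i = 0 := by
  rw [coordSub_eq_spanSubset, Pi.mem_spanSubset_iff]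

lemma finrank_coordSub (T : Finset (Fin n)) :
    Module.finrank 𝔽 (coordSub 𝔽 (T : Set (Fin n))) = #T := by
  rw [coordSub_eq_spanSubset, Pi.dim_spanSubset, Set.ncard_coe_finset]

lemma coordSub_mono {T T' : Set (Fin n)} (h : T ⊆ T') : coordSub 𝔽 T ≤ coordSub 𝔽 T' :=
  span_mono (Set.image_mono h)

lemma coordSub_sup_span_single [DecidableEq (Fin n)] (j : Fin n) (T : Set (Fin n)) :
    coordSub 𝔽 T ⊔ span 𝔽 {Pi.single j (1 : 𝔽)} = coordSub 𝔽 (insert j T) := by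
  obtain rfl : ‹DecidableEq (Fin n)› = instDecidableEqFin n := Subsingleton.elim _ _
  rw [coordSub, coordSub, Set.image_insert_eq, span_insert, sup_comm]

end Coordinates

theorem Finset.exists_subset_injective_of_card_le_card_biUnion_add {ι α : Type*} [DecidableEq α]
    (t : ι → Finset α) (Y : Finset ι) (r : ℕ) (h : ∀ s ⊆ Y, #s ≤ #(s.biUnion t) + r) :
    ∃ Z ⊆ Y, #Y ≤ #Z + r ∧ ∃ f : Z → α, Injective f ∧ ∀ z : Z, f z ∈ t z := by
  classical
  -- pad every target set with the same `r` fresh elements and apply Hall's theorem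
  let t' : Y → Finset (α ⊕ Fin r) := fun y => (t y).disjSum univ
  have hall : ∀ s : Finset Y, #s ≤ #(s.biUnion t') := by
    intro s
    rcases s.eq_empty_or_nonempty with rfl | ⟨y₀, hy₀⟩
    · simp
    have : s.biUnion t' = (s.biUnion fun y => t y).disjSum univ := by
      ext (a | a)
      · simp [t']
      · simpa [t'] using ⟨_, y₀.2, hy₀⟩
    rw [this, card_disjSum, card_univ, Fintype.card_fin]
    have hsY : s.image (↑) ⊆ Y := fun x hx => by
      obtain ⟨y, -, rfl⟩ := mem_image.mp hx
      exact y.2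
    simpa only [card_image_of_injective _ Subtype.val_injective, image_biUnion] using h _ hsY
  obtain ⟨f', hf'inj, hf't⟩ := (all_card_le_biUnion_card_iff_exists_injective t').mp hall
  let Z := Y.filter fun y => ∃ hy : y ∈ Y, (f' ⟨y, hy⟩).isLeft
  have hZY : Z ⊆ Y := filter_subset _ _
  have hleft : ∀ z : Z, ∃ a, f' ⟨z, hZY z.2⟩ = .inl a := fun z =>
    Sum.isLeft_iff.mp (mem_filter.mp z.2).2.choose_spec
  choose g hg using hleft
  refine ⟨Z, hZY, ?_, g, fun z₁ z₂ h => ?_, fun z => ?_⟩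
  · have himage : univ.image f' ⊆ (univ.image g).disjSum univ := by
      intro a ha
      obtain ⟨y, -, rfl⟩ := mem_image.mp ha
      rcases hy : f' y with a | a
      · have hyZ : (y : ι) ∈ Z := mem_filter.mpr ⟨y.2, y.2, by simp [hy]⟩
        have : Sum.inl a = Sum.inl (g ⟨y, hyZ⟩) := hy.symm.trans (hg ⟨y, hyZ⟩)
        simp [Sum.inl_injective this]
      · simp
    calc #Y = #(univ.image f') := by
          rw [card_image_of_injective _ hf'inj, card_univ, Fintype.card_coe]
      _ ≤ #(univ.image g) + r := by simpa using card_le_card himage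
      _ ≤ #Z + r := by simpa using card_image_le (s := univ) (f := g)
  · have := hf'inj ((hg z₁).trans (h ▸ hg z₂).symm)
    exact Subtype.ext (congrArg Subtype.val this :)
  · simpa [hg z, t'] using hf't ⟨z, hZY z.2⟩

lemma LinearIndependent.exists_injective_apply_ne_zero {𝔽 ι σ : Type*} [Field 𝔽] [Fintype ι]
    [Fintype σ] [DecidableEq σ] {v : ι → σ → 𝔽} (hv : LinearIndependent 𝔽 v) :
    ∃ h : ι → σ, Injective h ∧ ∀ i, v i (h i) ≠ 0 := by
  classical
  let t : ι → Finset σ := fun i => univ.filter (v i · ≠ 0)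
  have hall : ∀ s : Finset ι, #s ≤ #(s.biUnion t) := by
    intro s
    have hle : span 𝔽 (Set.range (v ∘ ((↑) : s → ι))) ≤ Pi.spanSubset 𝔽 ↑(s.biUnion t) := by
      rw [span_le]
      rintro _ ⟨i, rfl⟩
      rw [SetLike.mem_coe, Pi.mem_spanSubset_iff]
      intro j hj
      by_contra hij
      exact hj (by simpa [t] using ⟨i, i.2, hij⟩)
    calc #s = Module.finrank 𝔽 (span 𝔽 (Set.range (v ∘ ((↑) : s → ι)))) := by
          rw [finrank_span_eq_card (hv.comp _ Subtype.val_injective), Fintype.card_coe]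
      _ ≤ Module.finrank 𝔽 (Pi.spanSubset 𝔽 (↑(s.biUnion t) : Set σ)) :=
          Submodule.finrank_mono hle
      _ = #(s.biUnion t) := by rw [Pi.dim_spanSubset, Set.ncard_coe_finset]
  obtain ⟨h, hinj, hh⟩ := (all_card_le_biUnion_card_iff_exists_injective t).mp hall
  exact ⟨h, hinj, fun i => by simpa [t] using hh i⟩

lemma avoidsT_empty {α ι : Type*} (A : ι → Set α) : AvoidsT A ∅ :=
  ⟨fun x => absurd x.2 (notMem_empty _), fun x => absurd x.2 (notMem_empty _),
    fun x => absurd x.2 (notMem_empty _)⟩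

section atRank

variable {α ι : Type*} {A : ι → Set α} {X : Finset α}

lemma le_atRank {Z : Finset α} (hZX : Z ⊆ X) (hZ : AvoidsT A Z) : #Z ≤ atRank A X :=
  le_csSup ⟨#X, fun _ ⟨_, hY, _, hm⟩ => hm ▸ card_le_card hY⟩ ⟨Z, hZX, hZ, rfl⟩

lemma atRank_le {m : ℕ} (h : ∀ Z ⊆ X, AvoidsT A Z → #Z ≤ m) : atRank A X ≤ m :=
  csSup_le ⟨0, ∅, empty_subset X, avoidsT_empty A, card_empty⟩ fun _ ⟨Z, hZX, hZ, hm⟩ =>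
    hm ▸ h Z hZX hZ

end atRank

section qtRank

variable {𝔽 V ι : Type*} [Field 𝔽] [AddCommGroup V] [Module 𝔽 V] {X : ι → Submodule 𝔽 V}

lemma isPartialQT_bot (X : ι → Submodule 𝔽 V) : IsPartialQT X ⊥ := by
  intro β hβ hli _
  obtain rfl : β = ∅ := eq_empty_of_forall_notMem fun x hx =>
    hli.ne_zero ⟨x, hx⟩ ((mem_bot 𝔽).mp (hβ hx))
  exact avoidsT_empty _

lemma qtRank_le {W : Submodule 𝔽 V} {m : ℕ}
    (h : ∀ U ≤ W, IsPartialQT X U → Module.finrank 𝔽 U ≤ m) : qtRank X W ≤ m :=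
  csSup_le ⟨0, ⊥, bot_le, isPartialQT_bot X, finrank_bot 𝔽 V⟩ fun _ ⟨U, hUW, hU, hd⟩ =>
    hd ▸ h U hUW hU

variable [FiniteDimensional 𝔽 V]

lemma le_qtRank {U W : Submodule 𝔽 V} (hUW : U ≤ W) (hU : IsPartialQT X U) :
    Module.finrank 𝔽 U ≤ qtRank X W :=
  le_csSup ⟨_, fun _ ⟨U, _, _, hd⟩ => hd ▸ Submodule.finrank_le U⟩ ⟨U, hUW, hU, rfl⟩

lemma qtRank_mono {W W' : Submodule 𝔽 V} (h : W ≤ W') : qtRank X W ≤ qtRank X W' :=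
  qtRank_le fun _ hU hq => le_qtRank (hU.trans h) hq

lemma IsPartialQT.finrank_le_card {U W : Submodule 𝔽 V} {N : Finset ι}
    (hU : IsPartialQT X U) (hWU : W ≤ U) (hN : ∀ i, ¬ W ≤ X i → i ∈ N) :
    Module.finrank 𝔽 W ≤ #N := by
  obtain ⟨b, hbW, hbspan, hbli⟩ := exists_linearIndependent 𝔽 (W : Set V)
  obtain ⟨c, hcU, hbc, hUc, hcli⟩ := exists_linearIndepOn_id_extension hbli (hbW.trans hWU)
  have : Finite c := hcli.finite_of_isNoetherian
  obtain ⟨β, rfl⟩ := (Set.toFinite c).exists_finset_coe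
  obtain ⟨f, hfinj, hf⟩ := hU β hcU hcli ((span_le.mpr hcU).antisymm hUc)
  have : Fintype b := ((Set.toFinite _).subset hbc).fintype
  calc Module.finrank 𝔽 W = Module.finrank 𝔽 (span 𝔽 b) := by rw [hbspan, span_eq]
    _ = Fintype.card b := by rw [finrank_span_set_eq_card hbli, Set.toFinset_card]
    _ ≤ Fintype.card N := Fintype.card_le_of_injective
        (fun x => ⟨f ⟨x, hbc x.2⟩, hN _ fun hle => hf _ (hle (hbW x.2))⟩)
        fun x y h => Subtype.ext (congrArg Subtype.val (hfinj (congrArg Subtype.val h)) :)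
    _ = #N := Fintype.card_coe N

end qtRank

section Transversal

variable {𝔽 : Type*} [Field 𝔽] {n k : ℕ} (S : Fin k → Set (Fin n))

lemma AvoidsT.isPartialQT_coordSub {Z : Finset (Fin n)} (hZ : AvoidsT S Z) :
    IsPartialQT (fun i => coordSub 𝔽 (S i)) (coordSub 𝔽 (Z : Set (Fin n))) := by
  obtain ⟨g, hginj, hg⟩ := hZ
  intro β hβ hli _
  obtain ⟨h, hinj, hh⟩ := hli.exists_injective_apply_ne_zero
  have hhZ : ∀ b, h b ∈ Z := fun b =>
    by_contra fun hb => hh b (mem_coordSub_iff.mp (hβ b.2) _ hb)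
  exact ⟨fun b => g ⟨h b, hhZ b⟩, fun b₁ b₂ e => hinj (congrArg Subtype.val (hginj e)),
    fun b hb => hh b (mem_coordSub_iff.mp hb _ (hg _))⟩

lemma IsPartialQT.exists_avoidsT_finrank_le_card {Y : Finset (Fin n)}
    {U : Submodule 𝔽 (Fin n → 𝔽)} (hU : IsPartialQT (fun i => coordSub 𝔽 (S i)) U)
    (hUY : U ≤ coordSub 𝔽 (Y : Set (Fin n))) :
    ∃ Z ⊆ Y, AvoidsT S Z ∧ Module.finrank 𝔽 U ≤ #Z := by
  classical
  have hUdim : Module.finrank 𝔽 U ≤ #Y :=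
    finrank_coordSub (𝔽 := 𝔽) Y ▸ Submodule.finrank_mono hUY
  let t : Fin n → Finset (Fin k) := fun y => univ.filter (y ∉ S ·)
  have hall : ∀ T ⊆ Y, #T ≤ #(T.biUnion t) + (#Y - Module.finrank 𝔽 U) := by
    intro T hTY
    have hinf : Module.finrank 𝔽 ↥(U ⊓ coordSub 𝔽 T) ≤ #(T.biUnion t) := by
      refine hU.finrank_le_card inf_le_left fun i hi => ?_
      by_contra hiT
      refine hi (inf_le_right.trans (coordSub_mono fun y hy => ?_))
      by_contra hyS
      exact hiT (mem_biUnion.mpr ⟨y, hy, by simpa [t] using hyS⟩)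
    have hsup : Module.finrank 𝔽 ↥(U ⊔ coordSub 𝔽 T) ≤ #Y :=
      finrank_coordSub (𝔽 := 𝔽) Y ▸ Submodule.finrank_mono (sup_le hUY (coordSub_mono hTY))
    have := Submodule.finrank_sup_add_finrank_inf_eq U (coordSub 𝔽 (T : Set (Fin n)))
    rw [finrank_coordSub] at this
    omega
  obtain ⟨Z, hZY, hcard, f, hfinj, hf⟩ :=
    exists_subset_injective_of_card_le_card_biUnion_add t Y _ hall
  exact ⟨Z, hZY, ⟨f, hfinj, fun z => by simpa [t] using hf z⟩, by omega⟩

theorem qtRank_coordSub_eq_atRank (Y : Finset (Fin n)) :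
    qtRank (fun i => coordSub 𝔽 (S i)) (coordSub 𝔽 (Y : Set (Fin n))) = atRank S Y := by
  refine le_antisymm (qtRank_le fun U hUY hU => ?_) (atRank_le fun Z hZY hZ => ?_)
  · obtain ⟨Z, hZY, hZ, hUZ⟩ := hU.exists_avoidsT_finrank_le_card S hUY
    exact hUZ.trans (le_atRank hZY hZ)
  · rw [← finrank_coordSub (𝔽 := 𝔽)]
    exact le_qtRank (coordSub_mono hZY) (hZ.isPartialQT_coordSub S)

end Transversal

theorem stmt8_general {𝔽 : Type*} [Field 𝔽] {n k : ℕ} [DecidableEq (Fin n)]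
    (S : Fin k → Set (Fin n)) (X : Finset (Fin n))
    (hnotflat : ¬ ∀ j ∉ X, atRank S X < atRank S (insert j X)) :
    ∃ j ∉ X,
      qtRank (fun i => coordSub 𝔽 (S i))
          (coordSub 𝔽 (X : Set (Fin n)) ⊔ span 𝔽 {Pi.single j (1 : 𝔽)})
        = qtRank (fun i => coordSub 𝔽 (S i)) (coordSub 𝔽 (X : Set (Fin n))) := by
  push Not at hnotflat
  obtain ⟨j, hjX, hle⟩ := hnotflat
  refine ⟨j, hjX, le_antisymm ?_ (qtRank_mono le_sup_left)⟩
  rw [coordSub_sup_span_single, ← coe_insert, qtRank_coordSub_eq_atRank,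
    qtRank_coordSub_eq_atRank]
  exact hle

/-- if `X ⊆ [n]` is not a flat of the avoidance transversal matroid,
then `φ(X)` is not a flat of the corresponding transversal q-matroid: some `e_j`
with `j ∉ X` does not increase the rank of `φ(X)`. -/
theorem stmt8 {𝔽 : Type*} [Field 𝔽] [Fintype 𝔽] {n k : ℕ} [DecidableEq (Fin n)]
    (S : Fin k → Set (Fin n)) (X : Finset (Fin n))
    (hnotflat : ¬ ∀ j ∉ X, atRank S X < atRank S (insert j X)) :
    ∃ j ∉ X,
      qtRank (fun i => coordSub 𝔽 (S i))
          (coordSub 𝔽 (X : Set (Fin n)) ⊔ span 𝔽 {Pi.single j (1 : 𝔽)})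
        = qtRank (fun i => coordSub 𝔽 (S i)) (coordSub 𝔽 (X : Set (Fin n))) :=
  stmt8_general S X hnotflat
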